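/- There exists R₀ > 1 such that for all R > R₀ the following holds: for every w ∈ K⁻, writing H⁻ⁿ(w) = (xₙ,yₙ,zₙ) and Nₙ = max{R, |xₙ|, (1+δ)|yₙ|^{1/2}}, the sequence (Nₙ) is non-increasing, i.e. Nₙ₊₁ ≤ Nₙ for all n ≥ 0. -/

import Mathlib

open Complex Filter Topology

/-- The quadratic automorphism `H(x,y,z) = (xy + az, x² + by, x)` of `ℂ³`. -/
noncomputable def H (a b : ℂ) (w : ℂ × ℂ × ℂ) : ℂ × ℂ × ℂ :=
  (w.1 * w.2.1 + a * w.2.2, w.1 ^ 2 + b * w.2.1, w.1)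

/-- The inverse automorphism
`H⁻¹(x,y,z) = (z, (y − z²)/b, (x − z(y − z²)/b)/a)`. -/
noncomputable def Hinv (a b : ℂ) (w : ℂ × ℂ × ℂ) : ℂ × ℂ × ℂ :=
  (w.2.2, (w.2.1 - w.2.2 ^ 2) / b,
    (w.1 - w.2.2 * ((w.2.1 - w.2.2 ^ 2) / b)) / a)

/-- `V⁺ = {(x,y,z) : |z| > max{R, |x|, (1+δ)|y|^{1/2}}}`. -/
def Vplus (δ R : ℝ) : Set (ℂ × ℂ × ℂ) :=
  {w | ‖w.2.2‖ >
    max R (max (‖w.1‖) ((1 + δ) * Real.sqrt (‖w.2.1‖)))}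

/-- `U⁻ = ⋃_{n≥0} Hⁿ(V⁺)`. -/
noncomputable def Uminus (a b : ℂ) (δ R : ℝ) : Set (ℂ × ℂ × ℂ) :=
  ⋃ n : ℕ, (H a b)^[n] '' Vplus δ R

/-- `K⁻ = ℂ³ \ U⁻`. -/
noncomputable def Kminus (a b : ℂ) (δ R : ℝ) : Set (ℂ × ℂ × ℂ) :=
  (Uminus a b δ R)ᶜ

/-- `Nₙ = max{R, |xₙ|, (1+δ)|yₙ|^{1/2}}` where `H⁻ⁿ(w) = (xₙ,yₙ,zₙ)`. -/
noncomputable def Nseq (a b : ℂ) (δ R : ℝ) (w : ℂ × ℂ × ℂ) (n : ℕ) : ℝ :=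
  max R (max (‖((Hinv a b)^[n] w).1‖)
    ((1 + δ) * Real.sqrt (‖((Hinv a b)^[n] w).2.1‖)))

/-
Write `N(p) = max{R, |x|, (1+δ)|y|^{1/2}}` for `p = (x, y, z)`, and let `(z, y', x')` be `H⁻¹(p)`.
If `N` increased along this step while `|z| ≤ N(p)` and `|x'| ≤ N(H⁻¹ p)`, the increase would have
to come from `s = |y'|^{1/2}`, with `N(p) < (1+δ)s`. The third coordinate of `H⁻¹` gives
`|z| s² = |z y'| ≤ |x| + |a||x'| < (1+δ)(1+|a|)s`, so `|z| = O(1/s)` and, for `R` large,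
`|z|² < δ s²`. But `(1+δ)s² = |y − z²| ≤ |y| + |z|²`, hence `s² < |y|` and `(1+δ)s < N(p)`.
-/

noncomputable def zBound (δ R : ℝ) (p : ℂ × ℂ × ℂ) : ℝ :=
  max R (max ‖p.1‖ ((1 + δ) * Real.sqrt ‖p.2.1‖))

lemma Nseq_eq_zBound (a b : ℂ) (δ R : ℝ) (w : ℂ × ℂ × ℂ) (n : ℕ) :
    Nseq a b δ R w n = zBound δ R ((Hinv a b)^[n] w) := rfl

lemma leftInverse_H_Hinv {a b : ℂ} (ha : a ≠ 0) (hb : b ≠ 0) :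
    Function.LeftInverse (H a b) (Hinv a b) := by
  rintro ⟨x, y, z⟩
  simp only [H, Hinv, Prod.mk.injEq, and_true]
  constructor <;> field_simp <;> ring

lemma norm_iterate_Hinv_le_Nseq {a b : ℂ} (ha : a ≠ 0) (hb : b ≠ 0) {δ R : ℝ}
    {w : ℂ × ℂ × ℂ} (hw : w ∈ Kminus a b δ R) (n : ℕ) :
    ‖((Hinv a b)^[n] w).2.2‖ ≤ Nseq a b δ R w n := by
  by_contra! h
  exact hw (Set.mem_iUnion.mpr
    ⟨n, (Hinv a b)^[n] w, h, ((leftInverse_H_Hinv ha hb).iterate n) w⟩)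

section Step

variable {a b : ℂ} {δ : ℝ} (p : ℂ × ℂ × ℂ)

lemma norm_mul_norm_Hinv_snd_fst (hb : b ≠ 0) :
    ‖b‖ * ‖(Hinv a b p).2.1‖ = ‖p.2.1 - p.2.2 ^ 2‖ := by
  rw [← norm_mul, Hinv, mul_div_cancel₀ _ hb]

lemma norm_mul_Hinv_snd_fst_le (ha : a ≠ 0) :
    ‖p.2.2‖ * ‖(Hinv a b p).2.1‖ ≤ ‖p.1‖ + ‖a‖ * ‖(Hinv a b p).2.2‖ := by
  have hx : p.2.2 * (Hinv a b p).2.1 = p.1 - a * (Hinv a b p).2.2 := by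
    simp only [Hinv]
    field_simp
    ring
  rw [← norm_mul, ← norm_mul, hx]
  exact norm_sub_le _ _

theorem zBound_Hinv_le (ha : a ≠ 0) (hb : b ≠ 0) (hbδ : ‖b‖ = 1 + δ) (hδ : 0 < δ)
    {R : ℝ} (hR : 0 ≤ R) (hRlarge : (1 + δ) ^ 6 * (1 + ‖a‖) ^ 2 < δ * R ^ 4)
    (hp : ‖p.2.2‖ ≤ zBound δ R p) (hq : ‖(Hinv a b p).2.2‖ ≤ zBound δ R (Hinv a b p)) :
    zBound δ R (Hinv a b p) ≤ zBound δ R p := by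
  set q := Hinv a b p
  set N := zBound δ R p
  set s := Real.sqrt ‖q.2.1‖
  have hRN : R ≤ N := le_max_left _ _
  have hxN : ‖p.1‖ ≤ N := le_max_of_le_right (le_max_left _ _)
  have hyN : (1 + δ) * Real.sqrt ‖p.2.1‖ ≤ N := le_max_of_le_right (le_max_right _ _)
  by_contra! hlt
  -- `q.1 = p.2.2`, so only the `y`-term of `zBound δ R q` can exceed `N`
  have hNs : N < (1 + δ) * s := by
    rcases lt_max_iff.mp hlt with h | h
    · exact absurd (hRN.trans_lt h) (lt_irrefl _)
    rcases lt_max_iff.mp h with h | h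
    · exact absurd (hp.trans_lt h) (lt_irrefl _)
    · exact h
  have hq' : ‖q.2.2‖ ≤ (1 + δ) * s :=
    hq.trans (max_le (hRN.trans hNs.le) (max_le (hp.trans hNs.le) le_rfl))
  have hδ1 : 0 < 1 + δ := by linarith
  have hs : 0 < s := pos_of_mul_pos_right ((hR.trans hRN).trans_lt hNs) hδ1.le
  have hs2 : s ^ 2 = ‖q.2.1‖ := Real.sq_sqrt (norm_nonneg _)
  have hzs : ‖p.2.2‖ * s < (1 + δ) * (1 + ‖a‖) := by
    refine lt_of_mul_lt_mul_right ?_ hs.le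
    calc ‖p.2.2‖ * s * s = ‖p.2.2‖ * ‖q.2.1‖ := by rw [mul_assoc, ← sq, hs2]
      _ ≤ ‖p.1‖ + ‖a‖ * ‖q.2.2‖ := norm_mul_Hinv_snd_fst_le p ha
      _ < (1 + δ) * s + ‖a‖ * ((1 + δ) * s) :=
        add_lt_add_of_lt_of_le (hxN.trans_lt hNs) (by gcongr)
      _ = (1 + δ) * (1 + ‖a‖) * s := by ring
  have hs4 : (1 + δ) ^ 2 * (1 + ‖a‖) ^ 2 < δ * s ^ 4 := by
    have hR4 : R ^ 4 ≤ ((1 + δ) * s) ^ 4 := by gcongr; exact hRN.trans hNs.le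
    have : (1 + δ) ^ 4 * ((1 + δ) ^ 2 * (1 + ‖a‖) ^ 2) < (1 + δ) ^ 4 * (δ * s ^ 4) := by
      calc _ = (1 + δ) ^ 6 * (1 + ‖a‖) ^ 2 := by ring
        _ < δ * R ^ 4 := hRlarge
        _ ≤ δ * ((1 + δ) * s) ^ 4 := by gcongr
        _ = _ := by ring
    exact lt_of_mul_lt_mul_left this (by positivity)
  have hz2 : ‖p.2.2‖ ^ 2 < δ * s ^ 2 := by
    have : (‖p.2.2‖ * s) ^ 2 < (δ * s ^ 2) * s ^ 2 := by
      calc _ < ((1 + δ) * (1 + ‖a‖)) ^ 2 := by gcongr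
        _ = (1 + δ) ^ 2 * (1 + ‖a‖) ^ 2 := by ring
        _ < δ * s ^ 4 := hs4
        _ = _ := by ring
    rw [mul_pow] at this
    exact lt_of_mul_lt_mul_right this (by positivity)
  have hys : s ^ 2 < ‖p.2.1‖ := by
    have : (1 + δ) * s ^ 2 ≤ ‖p.2.1‖ + ‖p.2.2‖ ^ 2 := by
      calc (1 + δ) * s ^ 2 = ‖p.2.1 - p.2.2 ^ 2‖ := by
            rw [hs2, ← hbδ, norm_mul_norm_Hinv_snd_fst p hb]
        _ ≤ ‖p.2.1‖ + ‖p.2.2 ^ 2‖ := norm_sub_le _ _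
        _ = ‖p.2.1‖ + ‖p.2.2‖ ^ 2 := by rw [norm_pow]
    linarith
  have : (1 + δ) * s < (1 + δ) * Real.sqrt ‖p.2.1‖ := by
    gcongr
    exact Real.lt_sqrt_of_sq_lt hys
  linarith

end Step

theorem stmt4 (a b : ℂ) (ha : a ≠ 0) (hb : b ≠ 0) (δ : ℝ) (hδ : 0 < δ)
    (hbδ : ‖b‖ = 1 + δ) :
    ∃ R₀ > (1 : ℝ), ∀ R > R₀, ∀ w ∈ Kminus a b δ R, ∀ n : ℕ,
      Nseq a b δ R w (n + 1) ≤ Nseq a b δ R w n := by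
  set C := (1 + δ) ^ 6 * (1 + ‖a‖) ^ 2
  have hC : 0 < C / δ := by positivity
  refine ⟨1 + C / δ, by linarith, fun R hR w hw n => ?_⟩
  have hR1 : 1 < R := by linarith
  have hRlarge : C < δ * R ^ 4 :=
    calc C < δ * R := (div_lt_iff₀' hδ).mp (by linarith)
      _ < δ * R ^ 4 := by gcongr; exact lt_self_pow₀ hR1 (by norm_num)
  have hp := norm_iterate_Hinv_le_Nseq ha hb hw n
  have hq := norm_iterate_Hinv_le_Nseq ha hb hw (n + 1)
  rw [Nseq_eq_zBound] at hp hq ⊢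
  rw [Function.iterate_succ_apply'] at hq ⊢
  exact zBound_Hinv_le _ ha hb hbδ hδ (by linarith) hRlarge hp hq
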